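/- Deterministic core of Theorem 2 (consistency of the thresholded dendrogram estimator of the number of groups): Let n ≥ 1 be an integer, d : {1,…,n}² → ℝ symmetric, and let {G₁,…,G_{K₀}} be a partition of {1,…,n} into K₀ nonempty groups. Let π ∈ ℝ satisfy max_{1≤k≤K₀} max_{i,j∈G_k, i≠j} d(i,j) ≤ π and min_{1≤k<k′≤K₀} min_{i∈G_k, j∈G_{k′}} d(i,j) > π (the latter vacuous when K₀ = 1). Then, for every choice of tie-breaking of the HAC algorithm, K̂₀(d,π) = K₀. -/

import Mathlib

open Finset

/-- Complete-linkage dissimilarity `Δ(S,S') = max_{i ∈ S, j ∈ S'} d i j`, as an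
extended real (so that the value over an empty index set is `⊥`). -/
noncomputable def cLink {n : ℕ} (d : Fin n → Fin n → ℝ) (S S' : Finset (Fin n)) : EReal :=
  sSup {x : EReal | ∃ i ∈ S, ∃ j ∈ S', x = (d i j : EReal)}

/-- Within-cluster dissimilarity `Δ(C) = max_{i,j ∈ C, i ≠ j} d i j`, as an extended real;
for a singleton (or empty) cluster the value is `⊥`, which is smaller than every real. -/
noncomputable def cDiam {n : ℕ} (d : Fin n → Fin n → ℝ) (C : Finset (Fin n)) : EReal :=
  sSup {x : EReal | ∃ i ∈ C, ∃ j ∈ C, i ≠ j ∧ x = (d i j : EReal)}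

/-- The initial partition of `{1,…,n}` into `n` singleton clusters. -/
def singletonPartition (n : ℕ) : Finset (Finset (Fin n)) :=
  Finset.univ.image fun i : Fin n => ({i} : Finset (Fin n))

/-- `Q` is obtained from `P` by merging one pair of distinct clusters attaining the
minimum of the complete-linkage dissimilarity `Δ` over all pairs of distinct clusters. -/
def IsMergeStep {n : ℕ} (d : Fin n → Fin n → ℝ) (P Q : Finset (Finset (Fin n))) : Prop :=
  ∃ C ∈ P, ∃ C' ∈ P, C ≠ C' ∧
    (∀ D ∈ P, ∀ D' ∈ P, D ≠ D' → cLink d C C' ≤ cLink d D D') ∧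
    Q = insert (C ∪ C') ((P.erase C).erase C')

/-- A run of the complete-linkage HAC algorithm (with an arbitrary choice of
tie-breaking at each step): `P 0` is the singleton partition and for every
`r < n - 1`, `P (r+1)` is obtained from `P r` by a merge step. -/
def IsHACChain {n : ℕ} (d : Fin n → Fin n → ℝ) (P : ℕ → Finset (Finset (Fin n))) : Prop :=
  P 0 = singletonPartition n ∧ ∀ r, r < n - 1 → IsMergeStep d (P r) (P (r + 1))

/-- `G` is a partition of `{1,…,n}` into `K₀` nonempty groups. -/
def IsGroupPartition {n K₀ : ℕ} (G : Fin K₀ → Finset (Fin n)) : Prop :=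
  (∀ k, (G k).Nonempty) ∧ (∀ i : Fin n, ∃ k, i ∈ G k) ∧
    ∀ k k' : Fin K₀, k ≠ k' → Disjoint (G k) (G k')

/-- The partition `G` is `d`-separated: every within-group distance is strictly smaller
than every between-group distance (vacuously true when `K₀ = 1`). -/
def IsSeparated {n K₀ : ℕ} (d : Fin n → Fin n → ℝ) (G : Fin K₀ → Finset (Fin n)) : Prop :=
  ∀ k : Fin K₀, ∀ i ∈ G k, ∀ j ∈ G k, i ≠ j →
    ∀ k₁ k₂ : Fin K₀, k₁ ≠ k₂ → ∀ a ∈ G k₁, ∀ b ∈ G k₂, d i j < d a b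

/-- `A` is a refinement of `B`: every element of `A` is a subset of some element of `B`. -/
def IsRefinement {n : ℕ} (A B : Finset (Finset (Fin n))) : Prop :=
  ∀ C ∈ A, ∃ D ∈ B, C ⊆ D

/-- The thresholded dendrogram estimator of the number of groups:
`K̂₀(d,π) = min { K ∈ {1,…,n} : every cluster of the HAC partition into K clusters has
within-cluster dissimilarity at most π }`. -/
noncomputable def Khat {n : ℕ} (d : Fin n → Fin n → ℝ)
    (P : ℕ → Finset (Finset (Fin n))) (π : ℝ) : ℕ :=
  sInf {K : ℕ | 1 ≤ K ∧ K ≤ n ∧ ∀ C ∈ P (n - K), cDiam d C ≤ (π : EReal)}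

/-!
As long as the current partition has more clusters than there are groups and every cluster lies
inside a group, two of its clusters share a group, so their complete linkage is at most `π`.
The minimal pair that HAC merges therefore also has linkage at most `π`, which forces it into a
single group. Hence the partition into `K₀` clusters refines the groups and has all diameters at
most `π`, while any partition into fewer clusters puts two group representatives into one
cluster, whose diameter then exceeds `π`.
-/

structure IsPartition {α : Type*} (P : Finset (Finset α)) : Prop where
  nonempty : ∀ C ∈ P, C.Nonempty
  disjoint : ∀ C ∈ P, ∀ C' ∈ P, C ≠ C' → Disjoint C C'
  exists_mem : ∀ a, ∃ C ∈ P, a ∈ C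

def mergeParts {α : Type*} [DecidableEq α] (P : Finset (Finset α)) (C C' : Finset α) :
    Finset (Finset α) :=
  insert (C ∪ C') ((P.erase C).erase C')

section Partition

variable {α : Type*} [DecidableEq α] {P : Finset (Finset α)} {C C' : Finset α}

theorem mem_mergeParts {D : Finset α} :
    D ∈ mergeParts P C C' ↔ D = C ∪ C' ∨ D ≠ C' ∧ D ≠ C ∧ D ∈ P := by
  simp only [mergeParts, mem_insert, mem_erase]

namespace IsPartition

theorem union_notMem (hP : IsPartition P) (hC : C ∈ P) (hC' : C' ∈ P) (hne : C ≠ C') :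
    C ∪ C' ∉ P := by
  intro hmem
  obtain ⟨x, hx⟩ := hP.nonempty C hC
  by_cases h : C ∪ C' = C
  · obtain ⟨y, hy⟩ := hP.nonempty C' hC'
    exact disjoint_left.1 (hP.disjoint C hC C' hC' hne) (h ▸ mem_union_right C hy) hy
  · exact disjoint_left.1 (hP.disjoint _ hmem C hC h) (mem_union_left C' hx) hx

theorem card_mergeParts (hP : IsPartition P) (hC : C ∈ P) (hC' : C' ∈ P) (hne : C ≠ C') :
    (mergeParts P C C').card = P.card - 1 := by
  have hnotMem : C ∪ C' ∉ (P.erase C).erase C' :=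
    fun h ↦ hP.union_notMem hC hC' hne (mem_of_mem_erase (mem_of_mem_erase h))
  have htwo : 2 ≤ P.card := one_lt_card.2 ⟨C, hC, C', hC', hne⟩
  rw [mergeParts, card_insert_of_notMem hnotMem,
    card_erase_of_mem (mem_erase.2 ⟨hne.symm, hC'⟩), card_erase_of_mem hC]
  omega

theorem mergeParts (hP : IsPartition P) (hC : C ∈ P) (hC' : C' ∈ P) :
    IsPartition (mergeParts P C C') where
  nonempty D hD := by
    rcases mem_mergeParts.1 hD with rfl | ⟨-, -, hD⟩
    · exact (hP.nonempty C hC).mono subset_union_left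
    · exact hP.nonempty D hD
  disjoint D hD D' hD' hDD' := by
    rcases mem_mergeParts.1 hD with rfl | ⟨hDC', hDC, hD⟩ <;>
      rcases mem_mergeParts.1 hD' with rfl | ⟨hD'C', hD'C, hD'⟩
    · exact absurd rfl hDD'
    · exact disjoint_union_left.2
        ⟨hP.disjoint C hC D' hD' hD'C.symm, hP.disjoint C' hC' D' hD' hD'C'.symm⟩
    · exact disjoint_union_right.2 ⟨hP.disjoint D hD C hC hDC, hP.disjoint D hD C' hC' hDC'⟩
    · exact hP.disjoint D hD D' hD' hDD'
  exists_mem a := by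
    obtain ⟨D, hD, haD⟩ := hP.exists_mem a
    by_cases hDC : D = C
    · exact ⟨C ∪ C', mem_insert_self _ _, mem_union_left C' (hDC ▸ haD)⟩
    by_cases hDC' : D = C'
    · exact ⟨C ∪ C', mem_insert_self _ _, mem_union_right C (hDC' ▸ haD)⟩
    · exact ⟨D, mem_mergeParts.2 (Or.inr ⟨hDC', hDC, hD⟩), haD⟩

end IsPartition

end Partition

theorem exists_injective_mem {α ι : Type*} {G : ι → Finset α} (hne : ∀ k, (G k).Nonempty)
    (hdisj : ∀ k k', k ≠ k' → Disjoint (G k) (G k')) :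
    ∃ rep : ι → α, Function.Injective rep ∧ ∀ k, rep k ∈ G k := by
  choose rep hrep using hne
  refine ⟨rep, fun k k' h ↦ ?_, hrep⟩
  by_contra hkk'
  exact disjoint_left.1 (hdisj k k' hkk') (hrep k) (h ▸ hrep k')

theorem isPartition_singletonPartition (n : ℕ) : IsPartition (singletonPartition n) where
  nonempty C hC := by
    obtain ⟨i, -, rfl⟩ := mem_image.1 hC
    exact singleton_nonempty i
  disjoint C hC C' hC' hne := by
    obtain ⟨i, -, rfl⟩ := mem_image.1 hC
    obtain ⟨j, -, rfl⟩ := mem_image.1 hC'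
    exact disjoint_singleton.2 fun h ↦ hne (h ▸ rfl)
  exists_mem i := ⟨{i}, mem_image_of_mem _ (mem_univ i), mem_singleton_self i⟩

theorem card_singletonPartition (n : ℕ) : (singletonPartition n).card = n := by
  rw [singletonPartition, card_image_of_injective _ singleton_injective, card_univ,
    Fintype.card_fin]

section Linkage

variable {n : ℕ} {d : Fin n → Fin n → ℝ} {π : ℝ}

theorem cLink_le_coe_iff {S S' : Finset (Fin n)} :
    cLink d S S' ≤ (π : EReal) ↔ ∀ i ∈ S, ∀ j ∈ S', d i j ≤ π := by
  simp only [cLink, sSup_le_iff]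
  exact ⟨fun h i hi j hj ↦ EReal.coe_le_coe_iff.1 (h _ ⟨i, hi, j, hj, rfl⟩),
    by rintro h _ ⟨i, hi, j, hj, rfl⟩; exact EReal.coe_le_coe_iff.2 (h i hi j hj)⟩

theorem cDiam_le_coe_iff {C : Finset (Fin n)} :
    cDiam d C ≤ (π : EReal) ↔ ∀ i ∈ C, ∀ j ∈ C, i ≠ j → d i j ≤ π := by
  simp only [cDiam, sSup_le_iff]
  exact ⟨fun h i hi j hj hij ↦ EReal.coe_le_coe_iff.1 (h _ ⟨i, hi, j, hj, hij, rfl⟩),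
    by rintro h _ ⟨i, hi, j, hj, hij, rfl⟩; exact EReal.coe_le_coe_iff.2 (h i hi j hj hij)⟩

end Linkage

section Groups

variable {n : ℕ} {d : Fin n → Fin n → ℝ} {π : ℝ} {ι : Type*} {G : ι → Finset (Fin n)}
  {P : Finset (Finset (Fin n))}

theorem exists_cLink_le_of_card_lt [Fintype ι]
    (hwithin : ∀ k, ∀ i ∈ G k, ∀ j ∈ G k, i ≠ j → d i j ≤ π)
    (hP : IsPartition P) (hPG : ∀ C ∈ P, ∃ k, C ⊆ G k) (hcard : Fintype.card ι < P.card) :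
    ∃ D ∈ P, ∃ D' ∈ P, D ≠ D' ∧ cLink d D D' ≤ π := by
  obtain ⟨C₀, hC₀⟩ := card_pos.1 (Nat.zero_lt_of_lt hcard)
  have : Nonempty ι := ⟨(hPG C₀ hC₀).choose⟩
  choose! g hg using hPG
  obtain ⟨D, hD, D', hD', hDD', hgD⟩ :=
    exists_ne_map_eq_of_card_lt_of_maps_to (t := univ) hcard fun C _ ↦ mem_univ (g C)
  refine ⟨D, hD, D', hD', hDD', cLink_le_coe_iff.2 fun i hi j hj ↦ ?_⟩
  have hij : i ≠ j := fun h ↦ disjoint_left.1 (hP.disjoint D hD D' hD' hDD') hi (h ▸ hj)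
  exact hwithin (g D) i (hg D hD hi) j (hgD ▸ hg D' hD' hj) hij

theorem eq_of_cLink_le (hbetween : ∀ k k', k ≠ k' → ∀ i ∈ G k, ∀ j ∈ G k', π < d i j)
    {C C' : Finset (Fin n)} {k k' : ι} (hC : C.Nonempty) (hC' : C'.Nonempty)
    (hCk : C ⊆ G k) (hC'k' : C' ⊆ G k') (hlink : cLink d C C' ≤ π) : k = k' := by
  by_contra hkk'
  obtain ⟨i, hi⟩ := hC
  obtain ⟨j, hj⟩ := hC'
  exact (hbetween k k' hkk' i (hCk hi) j (hC'k' hj)).not_ge (cLink_le_coe_iff.1 hlink i hi j hj)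

theorem IsMergeStep.forall_exists_subset [Fintype ι] {Q : Finset (Finset (Fin n))}
    (hwithin : ∀ k, ∀ i ∈ G k, ∀ j ∈ G k, i ≠ j → d i j ≤ π)
    (hbetween : ∀ k k', k ≠ k' → ∀ i ∈ G k, ∀ j ∈ G k', π < d i j)
    (hm : IsMergeStep d P Q) (hP : IsPartition P) (hPG : ∀ C ∈ P, ∃ k, C ⊆ G k)
    (hcard : Fintype.card ι < P.card) :
    ∀ D ∈ Q, ∃ k, D ⊆ G k := by
  obtain ⟨C, hC, C', hC', -, hmin, rfl⟩ := hm
  obtain ⟨D, hD, D', hD', hDD', hlink⟩ := exists_cLink_le_of_card_lt hwithin hP hPG hcard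
  obtain ⟨k, hk⟩ := hPG C hC
  obtain ⟨k', hk'⟩ := hPG C' hC'
  have hkk' : k = k' := eq_of_cLink_le hbetween (hP.nonempty C hC) (hP.nonempty C' hC') hk hk'
    ((hmin D hD D' hD' hDD').trans hlink)
  intro E hE
  rcases mem_mergeParts.1 hE with rfl | ⟨-, -, hE⟩
  · exact ⟨k, union_subset hk (hkk' ▸ hk')⟩
  · exact hPG E hE

theorem exists_lt_cDiam_of_card_lt [Fintype ι] (hne : ∀ k, (G k).Nonempty)
    (hdisj : ∀ k k', k ≠ k' → Disjoint (G k) (G k'))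
    (hbetween : ∀ k k', k ≠ k' → ∀ i ∈ G k, ∀ j ∈ G k', π < d i j)
    (hP : IsPartition P) (hcard : P.card < Fintype.card ι) :
    ∃ C ∈ P, (π : EReal) < cDiam d C := by
  obtain ⟨rep, hinj, hrep⟩ := exists_injective_mem hne hdisj
  choose f hf hrepf using fun k ↦ hP.exists_mem (rep k)
  obtain ⟨k, -, k', -, hkk', hfk⟩ :=
    exists_ne_map_eq_of_card_lt_of_maps_to (s := univ) hcard fun k _ ↦ hf k
  refine ⟨f k, hf k, lt_of_not_ge fun hdiam ↦ ?_⟩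
  exact (hbetween k k' hkk' _ (hrep k) _ (hrep k')).not_ge
    (cDiam_le_coe_iff.1 hdiam _ (hrepf k) _ (hfk ▸ hrepf k') (hinj.ne hkk'))

end Groups

section Chain

variable {n : ℕ} {d : Fin n → Fin n → ℝ} {P : ℕ → Finset (Finset (Fin n))}

theorem IsHACChain.isPartition_and_card (hP : IsHACChain d P) :
    ∀ r ≤ n - 1, IsPartition (P r) ∧ (P r).card = n - r := by
  intro r hr
  induction r with
  | zero => exact hP.1 ▸ ⟨isPartition_singletonPartition n, card_singletonPartition n⟩
  | succ r ih =>
    obtain ⟨hpart, hcard⟩ := ih (by omega)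
    obtain ⟨C, hC, C', hC', hne, -, hQ⟩ := hP.2 r (by omega)
    rw [show P (r + 1) = mergeParts (P r) C C' from hQ]
    exact ⟨hpart.mergeParts hC hC', by rw [hpart.card_mergeParts hC hC' hne, hcard]; omega⟩

theorem IsHACChain.forall_exists_subset {π : ℝ} {ι : Type*} [Fintype ι] {G : ι → Finset (Fin n)}
    (hcover : ∀ i, ∃ k, i ∈ G k)
    (hwithin : ∀ k, ∀ i ∈ G k, ∀ j ∈ G k, i ≠ j → d i j ≤ π)
    (hbetween : ∀ k k', k ≠ k' → ∀ i ∈ G k, ∀ j ∈ G k', π < d i j)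
    (hP : IsHACChain d P) : ∀ r ≤ n - Fintype.card ι, ∀ C ∈ P r, ∃ k, C ⊆ G k := by
  intro r hr
  induction r with
  | zero =>
    intro C hC
    obtain ⟨i, -, rfl⟩ := mem_image.1 (hP.1 ▸ hC)
    obtain ⟨k, hk⟩ := hcover i
    exact ⟨k, singleton_subset_iff.2 hk⟩
  | succ r ih =>
    obtain ⟨k, -⟩ := hcover ⟨0, by omega⟩
    have : 0 < Fintype.card ι := Fintype.card_pos_iff.2 ⟨k⟩
    obtain ⟨hpart, hcard⟩ := hP.isPartition_and_card r (by omega)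
    exact (hP.2 r (by omega)).forall_exists_subset hwithin hbetween hpart (ih (by omega))
      (by omega)

end Chain

theorem khat_recovers_K0_general {n K₀ : ℕ} (hn : 1 ≤ n)
    (d : Fin n → Fin n → ℝ)
    (G : Fin K₀ → Finset (Fin n)) (hG : IsGroupPartition G)
    (π : ℝ)
    (hwithin : ∀ k : Fin K₀, ∀ i ∈ G k, ∀ j ∈ G k, i ≠ j → d i j ≤ π)
    (hbetween : ∀ k k' : Fin K₀, k ≠ k' → ∀ i ∈ G k, ∀ j ∈ G k', π < d i j)
    (P : ℕ → Finset (Finset (Fin n))) (hP : IsHACChain d P) :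
    Khat d P π = K₀ := by
  obtain ⟨hne, hcover, hdisj⟩ := hG
  have hK₀_pos : 1 ≤ K₀ := (hcover ⟨0, hn⟩).choose.pos
  have hK₀_le : K₀ ≤ n := by
    obtain ⟨rep, hinj, -⟩ := exists_injective_mem hne hdisj
    simpa using Fintype.card_le_of_injective rep hinj
  refine IsLeast.csInf_eq ⟨⟨hK₀_pos, hK₀_le, fun C hC ↦ ?_⟩, ?_⟩
  · obtain ⟨k, hk⟩ := hP.forall_exists_subset hcover hwithin hbetween (n - K₀)
      (by rw [Fintype.card_fin]) C hC
    exact cDiam_le_coe_iff.2 fun i hi j hj ↦ hwithin k i (hk hi) j (hk hj)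
  · rintro K ⟨hK_pos, hK_le, hdiam⟩
    by_contra! hK
    obtain ⟨hpart, hcard⟩ := hP.isPartition_and_card (n - K) (by omega)
    obtain ⟨C, hC, hlt⟩ := exists_lt_cDiam_of_card_lt hne hdisj hbetween hpart
      (by rw [hcard, Fintype.card_fin]; omega)
    exact hlt.not_ge (hdiam C hC)

/-- **Deterministic core of Theorem 2.** If the threshold `π` lies weakly above every
within-group distance and strictly below every between-group distance (the latter being
vacuous when `K₀ = 1`), then for every tie-breaking of the HAC algorithm the thresholded
dendrogram estimator recovers the number of groups: `K̂₀(d,π) = K₀`. -/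
theorem khat_recovers_K0 {n K₀ : ℕ} (hn : 1 ≤ n)
    (d : Fin n → Fin n → ℝ) (hsym : ∀ i j, d i j = d j i)
    (G : Fin K₀ → Finset (Fin n)) (hG : IsGroupPartition G)
    (π : ℝ)
    (hwithin : ∀ k : Fin K₀, ∀ i ∈ G k, ∀ j ∈ G k, i ≠ j → d i j ≤ π)
    (hbetween : ∀ k k' : Fin K₀, k ≠ k' → ∀ i ∈ G k, ∀ j ∈ G k', π < d i j)
    (P : ℕ → Finset (Finset (Fin n))) (hP : IsHACChain d P) :
    Khat d P π = K₀ :=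
  khat_recovers_K0_general hn d G hG π hwithin hbetween P hP
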